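/- arXiv:math/0509250 — 6 statements merged into one kernel-verified Lean document; each statement's English description precedes it below -/
import Mathlib

section
/- If B : U → X is a residuated linear operator between complete semimodules over a complete idempotent semiring, then P_{im B} := B ∘ B^♯ is the canonical projector onto im B: for every x ∈ X, B(B^♯(x)) = max{v ∈ im B : v ≤ x}. -/
/-- If `B : U → X` is a residuated linear operator between complete
semimodules over a complete idempotent semiring `K` (semimodules modeled
as complete lattices, whose idempotent addition is the join `⊔`, endowed
with an action of `K`), then `P_{im B} := B ∘ B^♯` is the canonical
projector onto `im B`: for every `x ∈ X`,
`B (B^♯ x) = max {v ∈ im B | v ≤ x}`. -/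
theorem proj_on_image {K U X : Type*} [CompleteLattice U] [CompleteLattice X]
    [SMul K U] [SMul K X]
    (B : U → X)
    (hadd : ∀ u v : U, B (u ⊔ v) = B u ⊔ B v)
    (hhom : ∀ (lam : K) (u : U), B (lam • u) = lam • B u)
    (Bs : X → U) (hres : ∀ u x, B u ≤ x ↔ u ≤ Bs x) (x : X) :
    IsGreatest {v : X | v ∈ Set.range B ∧ v ≤ x} (B (Bs x)) := by
  have hmono : ∀ u v : U, u ≤ v → B u ≤ B v := by
    intro u v h
    have : B (u ⊔ v) = B v := by rw [sup_eq_right.mpr h]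
    calc B u ≤ B u ⊔ B v := le_sup_left
      _ = B (u ⊔ v) := (hadd u v).symm
      _ = B v := this
  constructor
  · exact ⟨⟨Bs x, rfl⟩, (hres (Bs x) x).mpr le_rfl⟩
  · rintro v ⟨⟨u, rfl⟩, hle⟩
    exact hmono u (Bs x) ((hres u x).mp hle)
end

section
/- Let B : U → X and C : X → Y be residuated linear operators between complete semimodules and define Π := B ∘ (C ∘ B)^♯ ∘ C. Then Π = (B ∘ B^♯) ∘ (C^♯ ∘ C), Π is a projector (Π² = Π), and for all x ∈ X, Π(x) = max{ y ∈ im B : C y ≤ C x }. -/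
/-- Projection on an image parallel to a kernel.  Let `B : U → X` and
`C : X → Y` be residuated linear operators between complete semimodules
over a complete idempotent semiring `K` (modeled as complete lattices whose
idempotent addition is the join `⊔`, with an action of `K`), with residuals
`B^♯`, `C^♯` and `(C ∘ B)^♯`.  Define `Π := B ∘ (C ∘ B)^♯ ∘ C`.  Then
`Π = (B ∘ B^♯) ∘ (C^♯ ∘ C)`, `Π` is a projector (`Π ∘ Π = Π`), and for all
`x ∈ X`, `Π x = max {y ∈ im B | C y ≤ C x}`. -/
theorem proj_image_parallel_kernel {K U X Y : Type*}
    [CompleteLattice U] [CompleteLattice X] [CompleteLattice Y]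
    [SMul K U] [SMul K X] [SMul K Y]
    (B : U → X) (C : X → Y)
    (hBadd : ∀ u v : U, B (u ⊔ v) = B u ⊔ B v)
    (hBhom : ∀ (lam : K) (u : U), B (lam • u) = lam • B u)
    (hCadd : ∀ u v : X, C (u ⊔ v) = C u ⊔ C v)
    (hChom : ∀ (lam : K) (u : X), C (lam • u) = lam • C u)
    (Bs : X → U) (hBres : ∀ u x, B u ≤ x ↔ u ≤ Bs x)
    (Cs : Y → X) (hCres : ∀ x y, C x ≤ y ↔ x ≤ Cs y)
    (CBs : Y → U) (hCBres : ∀ u y, C (B u) ≤ y ↔ u ≤ CBs y) :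
    (B ∘ CBs ∘ C = (B ∘ Bs) ∘ (Cs ∘ C)) ∧
    ((B ∘ CBs ∘ C) ∘ (B ∘ CBs ∘ C) = B ∘ CBs ∘ C) ∧
    (∀ x : X, IsGreatest {y : X | y ∈ Set.range B ∧ C y ≤ C x}
      (B (CBs (C x)))) := by
  have hBmono : ∀ u v : U, u ≤ v → B u ≤ B v := by
    intro u v huv
    have : B (u ⊔ v) = B u ⊔ B v := hBadd u v
    rw [sup_eq_right.mpr huv] at this
    rw [this]; exact le_sup_left
  have hCBs : ∀ y : Y, CBs y = Bs (Cs y) := by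
    intro y
    apply le_antisymm
    · exact (hBres _ _).mp ((hCres _ _).mp ((hCBres _ _).mpr le_rfl))
    · exact (hCBres _ _).mp ((hCres _ _).mpr ((hBres _ _).mpr le_rfl))
  have hgreat : ∀ x : X, IsGreatest {y : X | y ∈ Set.range B ∧ C y ≤ C x}
      (B (CBs (C x))) := by
    intro x
    constructor
    · exact ⟨⟨_, rfl⟩, (hCBres _ _).mpr le_rfl⟩
    · rintro y ⟨⟨u, rfl⟩, hy⟩
      exact hBmono _ _ ((hCBres _ _).mp hy)
  refine ⟨?_, ?_, hgreat⟩
  · funext y; simp [hCBs]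
  · funext x
    simp only [Function.comp_apply]
    set z := B (CBs (C x)) with hz
    apply le_antisymm
    · exact (hgreat x).2 ⟨⟨_, rfl⟩, le_trans ((hCBres _ _).mpr le_rfl)
        ((hgreat x).1.2)⟩
    · exact (hgreat z).2 ⟨(hgreat x).1.1, le_rfl⟩
end

section
/- The canonical projector P_V onto a complete subsemimodule V of (R̄_max)^X is non-expansive in the sup-norm: for all functions u, v with ‖u − v‖_∞ < ∞, ‖P_V(u) − P_V(v)‖_∞ ≤ ‖u − v‖_∞. -/
section CanonicalProj

variable {X : Type*}

/-- The paper's `P_V u`; it is the largest element of `V` below `u` once `V` is closed under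
pointwise sups. -/
noncomputable def canonicalProj (V : Set (X → EReal)) (u : X → EReal) : X → EReal :=
  fun x => ⨆ f ∈ {f | f ∈ V ∧ ∀ y, f y ≤ u y}, f x

theorem canonicalProj_le_add {V : Set (X → EReal)}
    (hV : ∀ f ∈ V, ∀ c : ℝ, (fun x => f x + (c : EReal)) ∈ V)
    {u v : X → EReal} {c : ℝ} (huv : ∀ x, u x ≤ v x + c) (x : X) :
    canonicalProj V u x ≤ canonicalProj V v x + c := by
  refine iSup₂_le fun f ⟨hfV, hfu⟩ => ?_
  have hshift : (fun y => f y - c) ∈ {g | g ∈ V ∧ ∀ y, g y ≤ v y} :=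
    ⟨hV f hfV (-c), fun y => EReal.sub_le_of_le_add ((hfu y).trans (huv y))⟩
  calc f x = f x - c + c := EReal.sub_add_cancel.symm
    _ ≤ canonicalProj V v x + c := by
      gcongr
      exact le_iSup₂_of_le _ hshift le_rfl

end CanonicalProj

theorem proj_nonexpansive_general {X : Type*} (V : Set (X → EReal))
    (hVconst : ∀ f ∈ V, ∀ c : ℝ, (fun x => f x + (c : EReal)) ∈ V)
    (u v : X → EReal) (c : ℝ)
    (huv : ∀ x, u x ≤ v x + (c : EReal) ∧ v x ≤ u x + (c : EReal)) :
    (∀ x, (⨆ f ∈ {f | f ∈ V ∧ ∀ y, f y ≤ u y}, f x)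
        ≤ (⨆ f ∈ {f | f ∈ V ∧ ∀ y, f y ≤ v y}, f x) + (c : EReal)) ∧
    (∀ x, (⨆ f ∈ {f | f ∈ V ∧ ∀ y, f y ≤ v y}, f x)
        ≤ (⨆ f ∈ {f | f ∈ V ∧ ∀ y, f y ≤ u y}, f x) + (c : EReal)) :=
  ⟨canonicalProj_le_add hVconst fun x => (huv x).1,
    canonicalProj_le_add hVconst fun x => (huv x).2⟩

/-- The canonical projector `P_V` onto a complete subsemimodule `V` of
`(R̄_max)^X` (a set of functions `X → EReal` closed under arbitrary
pointwise sups and under addition of real constants) is non-expansive in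
the sup-norm: if `‖u − v‖_∞ ≤ c < ∞` (i.e. `u ≤ v + c` and `v ≤ u + c`
pointwise), then `‖P_V u − P_V v‖_∞ ≤ c` in the same sense.  Here
`P_V u = max {f ∈ V | f ≤ u} = ⨆ f ∈ {f ∈ V | f ≤ u}, f`. -/
theorem proj_nonexpansive {X : Type*} (V : Set (X → EReal))
    (hVsup : ∀ S : Set (X → EReal), S ⊆ V →
      (fun x => ⨆ f ∈ S, f x) ∈ V)
    (hVconst : ∀ f ∈ V, ∀ c : ℝ, (fun x => f x + (c : EReal)) ∈ V)
    (u v : X → EReal) (c : ℝ) (hc : 0 ≤ c)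
    (huv : ∀ x, u x ≤ v x + (c : EReal) ∧ v x ≤ u x + (c : EReal)) :
    (∀ x, (⨆ f ∈ {f | f ∈ V ∧ ∀ y, f y ≤ u y}, f x)
        ≤ (⨆ f ∈ {f | f ∈ V ∧ ∀ y, f y ≤ v y}, f x) + (c : EReal)) ∧
    (∀ x, (⨆ f ∈ {f | f ∈ V ∧ ∀ y, f y ≤ v y}, f x)
        ≤ (⨆ f ∈ {f | f ∈ V ∧ ∀ y, f y ≤ u y}, f x) + (c : EReal)) :=
  proj_nonexpansive_general V hVconst u v c huv
end

section
/- For a kernel operator C : (R̄_max)^X → (R̄_max)^Y, the map C^♯ ∘ C satisfies C^♯(C(v)) = min{ w ∈ −im C* : w ≥ v }, i.e., it is the projection of v onto −im C* from above, where C* is the transposed kernel operator and −im C* = {−C*u : u ∈ (R̄_max)^Y}. -/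
/-!
The kernel operator `C` and its residual `C^♯` form a Galois connection, `C v ≤ μ ↔ v ≤ C^♯ μ`,
which entrywise is the `EReal` adjunction `a + b ≤ c ↔ b ≤ -(a + -c)`. For any Galois connection
`l ⊣ u`, `u (l a)` is the least element of `range u` above `a`; and `C^♯ μ = -C*(-μ)`, so
`range C^♯ = -im C*`.
-/

open scoped Pointwise

theorem EReal.add_le_iff_le_neg_add_neg {a b c : EReal} : a + b ≤ c ↔ b ≤ -(a + -c) := by
  induction a using EReal.rec <;> induction b using EReal.rec <;> induction c using EReal.rec <;>
    simp [← EReal.coe_neg, ← EReal.coe_add, add_comm]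

theorem GaloisConnection.isLeast_range_inter_Ici {α β : Type*} [Preorder α] [Preorder β]
    {l : α → β} {u : β → α} (gc : GaloisConnection l u) (a : α) :
    IsLeast (Set.range u ∩ Set.Ici a) (u (l a)) :=
  ⟨⟨⟨l a, rfl⟩, gc.le_u_l a⟩, by
    rintro _ ⟨⟨b, rfl⟩, hab⟩
    exact gc.monotone_u (gc.l_le hab)⟩

noncomputable section KernelOperator

variable {X Y : Type*}

def kernelOp (C : Y → X → EReal) (v : X → EReal) : Y → EReal :=
  fun y => ⨆ x, C y x + v x

def kernelResidual (C : Y → X → EReal) (μ : Y → EReal) : X → EReal :=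
  fun x => -(⨆ y, C y x + -μ y)

theorem gc_kernelOp_kernelResidual (C : Y → X → EReal) :
    GaloisConnection (kernelOp C) (kernelResidual C) := by
  intro v μ
  simp only [Pi.le_def, kernelOp, kernelResidual, iSup_le_iff, EReal.le_neg (b := ⨆ _, _),
    EReal.add_le_iff_le_neg_add_neg (c := μ _), EReal.le_neg (a := v _)]
  exact forall_comm

theorem range_kernelResidual (C : Y → X → EReal) :
    Set.range (kernelResidual C) = -Set.range (kernelOp (flip C)) := by
  change Set.range (Neg.neg ∘ kernelOp (flip C) ∘ Neg.neg) = _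
  rw [Set.range_comp, neg_surjective.range_comp, Set.image_neg_eq_neg]

end KernelOperator

/-- For a kernel operator `C : (R̄_max)^X → (R̄_max)^Y`, with kernel
`C ∈ (R̄_max)^{Y×X}`, `(C v)(y) = sup_x C(y,x) + v(x)`, the map `C^♯ ∘ C`
is the projection from above onto `−im C*`:
`C^♯(C v) = min {w ∈ −im C* | w ≥ v}`, where `C*` is the transposed kernel
operator `(C* u)(x) = sup_y C(y,x) + u(y)` and
`−im C* = {−C* u | u ∈ (R̄_max)^Y}`.  Here the residual is
`(C^♯ μ)(x) = −(sup_y C(y,x) + (−μ(y))) = inf_y (−C(y,x) + μ(y))`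
with `+∞` absorbing for the addition. -/
theorem residual_proj_on_neg_image {X Y : Type*} (C : Y → X → EReal)
    (v : X → EReal) :
    IsLeast {w : X → EReal |
        (∃ u : Y → EReal, w = fun x => -(⨆ y, C y x + u y)) ∧
        ∀ x, v x ≤ w x}
      (fun x => -(⨆ y, C y x + (-(⨆ x', C y x' + v x')))) := by
  have h := (gc_kernelOp_kernelResidual C).isLeast_range_inter_Ici v
  rw [range_kernelResidual] at h
  refine (Set.ext fun w => and_congr (exists_congr fun u => ?_) Iff.rfl :
    _ = -Set.range (kernelOp (flip C)) ∩ Set.Ici v) ▸ h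
  exact (neg_eq_iff_eq_neg (a := w)).symm.trans eq_comm
end

section
/- Let X ⊆ R^n, U ⊆ R^m be convex, z : R^n → R ∪ {−∞} concave, w ∈ C²(R^n, R), ℓ ∈ C²(X×U, R), and f(x,u) = Fx + Gu + g affine. Suppose there exist α, β, C > 0 with −C I_n ≤ D²w ≤ −β I_n, D²_u ℓ ≤ −α I_m, ‖D²_x ℓ‖ ≤ C, ‖D²_{xu} ℓ‖ ≤ C. Then there exists δ₀ > 0, depending only on α, β, C, ‖F‖, ‖G‖, such that for all 0 < δ ≤ δ₀ the function (x,u) ↦ z(x) + w(x + δ f(x,u)) + δ ℓ(x,u) is concave on X × U. -/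
/-!
The objective is `z ∘ Prod.fst` plus the `C²` function `φ (x, u) = w (x + δ f(x, u)) + δ ℓ(x, u)`,
and a concave `ℝ ∪ {-∞}`-valued function plus a concave real one is concave, so it suffices that
the Hessian of `φ` is negative semidefinite on `X × U`. In a direction `v = (h, k)` the `w`-part
contributes at most `-β ‖h + δ (F h + G k)‖² ≤ -β ‖h‖² + 2δβ ‖h‖ (‖F‖ ‖h‖ + ‖G‖ ‖k‖)` and the
`ℓ`-part at most `δ (C ‖h‖² + 2C ‖h‖ ‖k‖ - α ‖k‖²)`. Completing the square in `‖k‖`, the negative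
terms `-β ‖h‖²` and `-δα ‖k‖²` absorb everything else as soon as
`δ ≤ αβ / ((2β‖F‖ + C) α + (2β‖G‖ + 2C)²)`.
-/

section Hessian

variable {E F G : Type*} [NormedAddCommGroup E] [NormedSpace ℝ E]
  [NormedAddCommGroup F] [NormedSpace ℝ F] [NormedAddCommGroup G] [NormedSpace ℝ G]

theorem iteratedFDeriv_comp_affine_apply {k : ℕ} {φ : F → G} (hφ : ContDiff ℝ k φ)
    (A : E →L[ℝ] F) (c : F) (x : E) (m : Fin k → E) :
    iteratedFDeriv ℝ k (fun y => φ (A y + c)) x m = iteratedFDeriv ℝ k φ (A x + c) (A ∘ m) := by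
  have hφc : ContDiff ℝ k fun z => φ (z + c) := hφ.comp (contDiff_id.add contDiff_const)
  change iteratedFDeriv ℝ k ((fun z => φ (z + c)) ∘ A) x m = _
  rw [A.iteratedFDeriv_comp_right hφc x le_rfl, iteratedFDeriv_comp_add_right]
  rfl

theorem iteratedFDeriv_two_comp_affine_add_mul {φ : F → ℝ} {ψ : E → ℝ}
    (hφ : ContDiff ℝ 2 φ) (hψ : ContDiff ℝ 2 ψ) (A : E →L[ℝ] F) (c : F) (δ : ℝ) (x v : E) :
    iteratedFDeriv ℝ 2 (fun y => φ (A y + c) + δ * ψ y) x ![v, v] =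
      iteratedFDeriv ℝ 2 φ (A x + c) ![A v, A v] + δ * iteratedFDeriv ℝ 2 ψ x ![v, v] := by
  have hφA : ContDiff ℝ 2 fun y => φ (A y + c) := hφ.comp (A.contDiff.add contDiff_const)
  rw [fun_iteratedFDeriv_add_apply hφA.contDiffAt (contDiff_const.mul hψ).contDiffAt]
  simp only [← smul_eq_mul (a := δ), iteratedFDeriv_const_smul_apply' hψ.contDiffAt]
  rw [add_apply, smul_apply, iteratedFDeriv_comp_affine_apply hφ]
  congr 2
  ext i; fin_cases i <;> rfl

theorem iteratedFDeriv_two_add_add {φ : E → ℝ} {x : E} (hφ : ContDiffAt ℝ 2 φ x) (u v : E) :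
    iteratedFDeriv ℝ 2 φ x ![u + v, u + v] =
      iteratedFDeriv ℝ 2 φ x ![u, u] + 2 * iteratedFDeriv ℝ 2 φ x ![u, v] +
        iteratedFDeriv ℝ 2 φ x ![v, v] := by
  have hsymm := hφ.isSymmSndFDerivAt (by simp) v u
  simp only [iteratedFDeriv_two_apply, Matrix.cons_val_zero, Matrix.cons_val_one, map_add,
    add_apply] at hsymm ⊢
  rw [hsymm]
  ring

theorem concaveOn_of_iteratedFDeriv_two_nonpos {s : Set E} (hs : Convex ℝ s) {φ : E → ℝ}
    (hφ : ContDiff ℝ 2 φ) (hφ'' : ∀ x ∈ s, ∀ v, iteratedFDeriv ℝ 2 φ x ![v, v] ≤ 0) :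
    ConcaveOn ℝ s φ := by
  refine ⟨hs, fun x hx y hy a b ha hb hab => ?_⟩
  let L : ℝ →L[ℝ] E := (1 : ℝ →L[ℝ] ℝ).smulRight (y - x)
  have hline : ∀ t : ℝ, AffineMap.lineMap x y t = L t + x := fun t => by
    simp [L, AffineMap.lineMap_apply_module']
  let D := AffineMap.lineMap (k := ℝ) x y ⁻¹' s
  have hψ : ContDiff ℝ 2 fun t => φ (L t + x) := hφ.comp (L.contDiff.add contDiff_const)
  have hψ' : ContDiff ℝ 1 (deriv fun t => φ (L t + x)) := hψ.deriv'
  have hconc : ConcaveOn ℝ D fun t => φ (L t + x) := by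
    refine concaveOn_of_deriv2_nonpos' (hs.affine_preimage _)
      (hψ.differentiable (by simp)).differentiableOn
      (hψ'.differentiable (by simp)).differentiableOn fun t ht => ?_
    rw [← iteratedDeriv_eq_iterate, iteratedDeriv_eq_iteratedFDeriv,
      iteratedFDeriv_comp_affine_apply hφ]
    convert hφ'' (L t + x) (by simpa [D, hline] using ht) (y - x) using 2
    ext i; fin_cases i <;> simp [L]
  have h0 : (0 : ℝ) ∈ D := by simpa [D] using hx
  have h1 : (1 : ℝ) ∈ D := by simpa [D] using hy
  have key := hconc.2 h0 h1 ha hb hab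
  simp only [smul_eq_mul, mul_zero, mul_one, zero_add, ← hline, AffineMap.lineMap_apply_zero,
    AffineMap.lineMap_apply_one] at key
  rwa [AffineMap.lineMap_apply_module, ← eq_sub_of_add_eq hab] at key

end Hessian

theorem sq_norm_sub_two_mul_le_sq_norm_add {E : Type*} [SeminormedAddCommGroup E] (x y : E) :
    ‖x‖ ^ 2 - 2 * ‖x‖ * ‖y‖ ≤ ‖x + y‖ ^ 2 := by
  have h : |‖x‖ - ‖y‖| ≤ ‖x + y‖ := by
    simpa using abs_norm_sub_norm_le x (-y)
  nlinarith [sq_abs (‖x‖ - ‖y‖), abs_nonneg (‖x‖ - ‖y‖), sq_nonneg ‖y‖]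

theorem quadratic_nonpos_of_small_step {α β C K₁ K₂ s t δ : ℝ} (hα : 0 < α) (hδ : 0 ≤ δ)
    (hδK : δ * ((2 * β * K₁ + C) * α + (2 * β * K₂ + 2 * C) ^ 2) ≤ α * β) :
    -β * s ^ 2 + 2 * δ * β * s * (K₁ * s + K₂ * t) + δ * (C * s ^ 2 + 2 * C * s * t - α * t ^ 2)
      ≤ 0 := by
  have hsq : 0 ≤ δ * ((2 * β * K₂ + 2 * C) * s - α * t) ^ 2 := by positivity
  have hs : δ * ((2 * β * K₁ + C) * α + (2 * β * K₂ + 2 * C) ^ 2) * s ^ 2 ≤ α * β * s ^ 2 :=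
    mul_le_mul_of_nonneg_right hδK (sq_nonneg s)
  have hs' : 0 ≤ δ * (2 * β * K₂ + 2 * C) ^ 2 * s ^ 2 := by positivity
  have ht : 0 ≤ δ * α ^ 2 * t ^ 2 := by positivity
  nlinarith

theorem EReal.coe_mul_add_coe_le {a b r s r' : ℝ} {x y x' : EReal} (ha : 0 ≤ a) (hb : 0 ≤ b)
    (hx : (a : EReal) * x + (b : EReal) * y ≤ x') (hr : a * r + b * s ≤ r') :
    (a : EReal) * (x + r) + (b : EReal) * (y + s) ≤ x' + r' := by
  rw [EReal.left_distrib_of_nonneg_of_ne_top (by exact_mod_cast ha) (EReal.coe_ne_top a),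
    EReal.left_distrib_of_nonneg_of_ne_top (by exact_mod_cast hb) (EReal.coe_ne_top b),
    add_add_add_comm]
  exact add_le_add hx (by exact_mod_cast hr)

section LocalProblem

variable {E V : Type*} [NormedAddCommGroup E] [NormedSpace ℝ E]
  [NormedAddCommGroup V] [NormedSpace ℝ V]

def eulerStepCLM (F : E →L[ℝ] E) (G : V →L[ℝ] E) (δ : ℝ) : E × V →L[ℝ] E :=
  .fst ℝ E V + δ • (F.comp (.fst ℝ E V) + G.comp (.snd ℝ E V))

@[simp]
theorem eulerStepCLM_apply (F : E →L[ℝ] E) (G : V →L[ℝ] E) (δ : ℝ) (p : E × V) :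
    eulerStepCLM F G δ p = p.1 + δ • (F p.1 + G p.2) :=
  rfl

theorem iteratedFDeriv_two_prod_le {ℓ : E × V → ℝ} {p : E × V} (hℓ : ContDiffAt ℝ 2 ℓ p)
    {α C : ℝ}
    (hℓuu : ∀ hu, iteratedFDeriv ℝ 2 ℓ p ![(0, hu), (0, hu)] ≤ -α * ‖hu‖ ^ 2)
    (hℓxx : ∀ hx hy, |iteratedFDeriv ℝ 2 ℓ p ![(hx, 0), (hy, 0)]| ≤ C * ‖hx‖ * ‖hy‖)
    (hℓxu : ∀ hx hu, |iteratedFDeriv ℝ 2 ℓ p ![(hx, 0), (0, hu)]| ≤ C * ‖hx‖ * ‖hu‖)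
    (v : E × V) :
    iteratedFDeriv ℝ 2 ℓ p ![v, v] ≤ C * ‖v.1‖ ^ 2 + 2 * C * ‖v.1‖ * ‖v.2‖ - α * ‖v.2‖ ^ 2 := by
  have hsplit := iteratedFDeriv_two_add_add hℓ (v.1, 0) (0, v.2)
  rw [Prod.fst_add_snd] at hsplit
  rw [hsplit]
  linarith [le_of_abs_le (hℓxx v.1 v.1), le_of_abs_le (hℓxu v.1 v.2), hℓuu v.2]

theorem hessian_localObjective_nonpos (F : E →L[ℝ] E) (G : V →L[ℝ] E) {w : E → ℝ}
    {ℓ : E × V → ℝ} {c : E} {p : E × V} (hℓ : ContDiffAt ℝ 2 ℓ p) {α β C δ : ℝ}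
    (hα : 0 < α) (hβ : 0 ≤ β) (hδ : 0 ≤ δ)
    (hδK : δ * ((2 * β * ‖F‖ + C) * α + (2 * β * ‖G‖ + 2 * C) ^ 2) ≤ α * β)
    (hwup : ∀ v, iteratedFDeriv ℝ 2 w c ![v, v] ≤ -β * ‖v‖ ^ 2)
    (hℓuu : ∀ hu, iteratedFDeriv ℝ 2 ℓ p ![(0, hu), (0, hu)] ≤ -α * ‖hu‖ ^ 2)
    (hℓxx : ∀ hx hy, |iteratedFDeriv ℝ 2 ℓ p ![(hx, 0), (hy, 0)]| ≤ C * ‖hx‖ * ‖hy‖)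
    (hℓxu : ∀ hx hu, |iteratedFDeriv ℝ 2 ℓ p ![(hx, 0), (0, hu)]| ≤ C * ‖hx‖ * ‖hu‖)
    (v : E × V) :
    iteratedFDeriv ℝ 2 w c ![eulerStepCLM F G δ v, eulerStepCLM F G δ v] +
      δ * iteratedFDeriv ℝ 2 ℓ p ![v, v] ≤ 0 := by
  have hdrift : ‖δ • (F v.1 + G v.2)‖ ≤ δ * (‖F‖ * ‖v.1‖ + ‖G‖ * ‖v.2‖) := by
    rw [norm_smul, Real.norm_of_nonneg hδ]
    gcongr
    exact (norm_add_le _ _).trans (add_le_add (F.le_opNorm _) (G.le_opNorm _))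
  have hstep : ‖v.1‖ ^ 2 - 2 * ‖v.1‖ * (δ * (‖F‖ * ‖v.1‖ + ‖G‖ * ‖v.2‖)) ≤
      ‖eulerStepCLM F G δ v‖ ^ 2 := by
    refine le_trans ?_ (sq_norm_sub_two_mul_le_sq_norm_add v.1 (δ • (F v.1 + G v.2)))
    gcongr
  have hw : iteratedFDeriv ℝ 2 w c ![eulerStepCLM F G δ v, eulerStepCLM F G δ v] ≤
      -β * ‖v.1‖ ^ 2 + 2 * δ * β * ‖v.1‖ * (‖F‖ * ‖v.1‖ + ‖G‖ * ‖v.2‖) := by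
    nlinarith [hwup (eulerStepCLM F G δ v)]
  have hℓv := mul_le_mul_of_nonneg_left (iteratedFDeriv_two_prod_le hℓ hℓuu hℓxx hℓxu v) hδ
  linarith [quadratic_nonpos_of_small_step (s := ‖v.1‖) (t := ‖v.2‖) hα hδ hδK]

end LocalProblem

theorem concavity_of_local_problem_general (n m : ℕ)
    (X : Set (EuclideanSpace ℝ (Fin n))) (U : Set (EuclideanSpace ℝ (Fin m)))
    (hX : Convex ℝ X) (hU : Convex ℝ U)
    (z : EuclideanSpace ℝ (Fin n) → EReal)
    (hz : ∀ x y, ∀ a b : ℝ, 0 ≤ a → 0 ≤ b → a + b = 1 →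
      (a : EReal) * z x + (b : EReal) * z y ≤ z (a • x + b • y))
    (w : EuclideanSpace ℝ (Fin n) → ℝ) (hw : ContDiff ℝ 2 w)
    (ℓ : EuclideanSpace ℝ (Fin n) × EuclideanSpace ℝ (Fin m) → ℝ)
    (hℓ : ContDiff ℝ 2 ℓ)
    (F : EuclideanSpace ℝ (Fin n) →L[ℝ] EuclideanSpace ℝ (Fin n))
    (G : EuclideanSpace ℝ (Fin m) →L[ℝ] EuclideanSpace ℝ (Fin n))
    (g : EuclideanSpace ℝ (Fin n))
    (α β C : ℝ) (hα : 0 < α) (hβ : 0 < β) (hC : 0 < C)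
    (hwup : ∀ x v, iteratedFDeriv ℝ 2 w x ![v, v] ≤ -β * ‖v‖ ^ 2)
    (hℓuu : ∀ p ∈ X ×ˢ U, ∀ hu,
      iteratedFDeriv ℝ 2 ℓ p ![(0, hu), (0, hu)] ≤ -α * ‖hu‖ ^ 2)
    (hℓxx : ∀ p ∈ X ×ˢ U, ∀ hx hy,
      |iteratedFDeriv ℝ 2 ℓ p ![(hx, 0), (hy, 0)]| ≤ C * ‖hx‖ * ‖hy‖)
    (hℓxu : ∀ p ∈ X ×ˢ U, ∀ hx hu,
      |iteratedFDeriv ℝ 2 ℓ p ![(hx, 0), (0, hu)]| ≤ C * ‖hx‖ * ‖hu‖) :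
    ∃ δ₀ > 0, ∀ δ : ℝ, 0 < δ → δ ≤ δ₀ →
      ∀ p ∈ X ×ˢ U, ∀ q ∈ X ×ˢ U, ∀ a b : ℝ, 0 ≤ a → 0 ≤ b → a + b = 1 →
        (a : EReal) *
            (z p.1 + ((w (p.1 + δ • (F p.1 + G p.2 + g)) + δ * ℓ p : ℝ) : EReal)) +
          (b : EReal) *
            (z q.1 + ((w (q.1 + δ • (F q.1 + G q.2 + g)) + δ * ℓ q : ℝ) : EReal)) ≤
        z (a • p.1 + b • q.1) +
          ((w ((a • p + b • q).1 + δ • (F (a • p + b • q).1 + G (a • p + b • q).2 + g)) +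
              δ * ℓ (a • p + b • q) : ℝ) : EReal) := by
  set K := (2 * β * ‖F‖ + C) * α + (2 * β * ‖G‖ + 2 * C) ^ 2
  have hK : 0 < K := by positivity
  refine ⟨α * β / K, by positivity, fun δ hδ hδ₀ p hp q hq a b ha hb hab => ?_⟩
  have hδK : δ * K ≤ α * β := (le_div_iff₀ hK).mp hδ₀
  have hφ : ConcaveOn ℝ (X ×ˢ U) fun r => w (eulerStepCLM F G δ r + δ • g) + δ * ℓ r := by
    refine concaveOn_of_iteratedFDeriv_two_nonpos (hX.prod hU)
      ((hw.comp ((eulerStepCLM F G δ).contDiff.add contDiff_const)).add (contDiff_const.mul hℓ))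
      fun r hr v => ?_
    rw [iteratedFDeriv_two_comp_affine_add_mul hw hℓ]
    exact hessian_localObjective_nonpos F G hℓ.contDiffAt hα hβ.le hδ.le hδK (hwup _)
      (hℓuu r hr) (hℓxx r hr) (hℓxu r hr) v
  have hstep : ∀ r, eulerStepCLM F G δ r + δ • g = r.1 + δ • (F r.1 + G r.2 + g) := fun r => by
    simp only [eulerStepCLM_apply, smul_add, add_assoc]
  simp only [hstep] at hφ
  exact EReal.coe_mul_add_coe_le ha hb (hz _ _ a b ha hb hab) (hφ.2 hp hq ha hb hab)

/-- Concavity of the local problems.  Let `X ⊆ ℝ^n`, `U ⊆ ℝ^m` be convex,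
`z : ℝ^n → ℝ ∪ {−∞}` concave, `w ∈ C²(ℝ^n, ℝ)`, `ℓ ∈ C²` on `X × U`, and
`f(x,u) = F x + G u + g` affine.  Assume `−C Iₙ ≤ D²w ≤ −β Iₙ`,
`D²_u ℓ ≤ −α I_m`, `‖D²_x ℓ‖ ≤ C`, `‖D²_{xu} ℓ‖ ≤ C` with `α, β, C > 0`.
Then there exists `δ₀ > 0` such that for all `0 < δ ≤ δ₀` the function
`(x,u) ↦ z(x) + w(x + δ f(x,u)) + δ ℓ(x,u)` is concave on `X × U`
(concavity for `ℝ ∪ {−∞}`-valued functions being expressed in `EReal`). -/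
theorem concavity_of_local_problem (n m : ℕ)
    (X : Set (EuclideanSpace ℝ (Fin n))) (U : Set (EuclideanSpace ℝ (Fin m)))
    (hX : Convex ℝ X) (hU : Convex ℝ U)
    (z : EuclideanSpace ℝ (Fin n) → EReal)
    (hz : ∀ x y, ∀ a b : ℝ, 0 ≤ a → 0 ≤ b → a + b = 1 →
      (a : EReal) * z x + (b : EReal) * z y ≤ z (a • x + b • y))
    (w : EuclideanSpace ℝ (Fin n) → ℝ) (hw : ContDiff ℝ 2 w)
    (ℓ : EuclideanSpace ℝ (Fin n) × EuclideanSpace ℝ (Fin m) → ℝ)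
    (hℓ : ContDiff ℝ 2 ℓ)
    (F : EuclideanSpace ℝ (Fin n) →L[ℝ] EuclideanSpace ℝ (Fin n))
    (G : EuclideanSpace ℝ (Fin m) →L[ℝ] EuclideanSpace ℝ (Fin n))
    (g : EuclideanSpace ℝ (Fin n))
    (α β C : ℝ) (hα : 0 < α) (hβ : 0 < β) (hC : 0 < C)
    (hwlow : ∀ x v, -C * ‖v‖ ^ 2 ≤ iteratedFDeriv ℝ 2 w x ![v, v])
    (hwup : ∀ x v, iteratedFDeriv ℝ 2 w x ![v, v] ≤ -β * ‖v‖ ^ 2)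
    (hℓuu : ∀ p ∈ X ×ˢ U, ∀ hu,
      iteratedFDeriv ℝ 2 ℓ p ![(0, hu), (0, hu)] ≤ -α * ‖hu‖ ^ 2)
    (hℓxx : ∀ p ∈ X ×ˢ U, ∀ hx hy,
      |iteratedFDeriv ℝ 2 ℓ p ![(hx, 0), (hy, 0)]| ≤ C * ‖hx‖ * ‖hy‖)
    (hℓxu : ∀ p ∈ X ×ˢ U, ∀ hx hu,
      |iteratedFDeriv ℝ 2 ℓ p ![(hx, 0), (0, hu)]| ≤ C * ‖hx‖ * ‖hu‖) :
    ∃ δ₀ > 0, ∀ δ : ℝ, 0 < δ → δ ≤ δ₀ →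
      ∀ p ∈ X ×ˢ U, ∀ q ∈ X ×ˢ U, ∀ a b : ℝ, 0 ≤ a → 0 ≤ b → a + b = 1 →
        (a : EReal) *
            (z p.1 + ((w (p.1 + δ • (F p.1 + G p.2 + g)) + δ * ℓ p : ℝ) : EReal)) +
          (b : EReal) *
            (z q.1 + ((w (q.1 + δ • (F q.1 + G q.2 + g)) + δ * ℓ q : ℝ) : EReal)) ≤
        z (a • p.1 + b • q.1) +
          ((w ((a • p + b • q).1 + δ • (F (a • p + b • q).1 + G (a • p + b • q).2 + g)) +
              δ * ℓ (a • p + b • q) : ℝ) : EReal) :=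
  concavity_of_local_problem_general n m X U hX hU z hz w hw ℓ hℓ F G g α β C hα hβ hC hwup hℓuu
    hℓxx hℓxu
end

section
/- Under the hypotheses of the concavity proposition, for all δ ≤ δ₀, h = (h₁,h₂) ∈ R^n × R^m, and (x,u) ∈ X × U, the Hessian quadratic form of b(x,u) = w(x + δ f(x,u)) + δ ℓ(x,u) satisfies h* ∇²b(x,u) h ≤ (δC(1+2‖F‖) − β)‖h₁‖² − δα‖h₂‖² + 2δC(1 + ‖G‖ + δ‖F‖‖G‖)‖h₁‖‖h₂‖. -/
/-!
By the chain rule, `D²b(x,u)[h,h] = D²w(x')[k,k] + δ D²ℓ(x,u)[h,h]`, where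
`k = h₁ + δ (F h₁ + G h₂)` is the derivative of the Euler step applied to `h`.
Since `-D²w` is positive semidefinite and at most `C`, Cauchy–Schwarz gives
`|D²w[a,b]| ≤ C ‖a‖ ‖b‖`; expanding `k = (h₁ + δ F h₁) + δ G h₂` and dropping the nonpositive
diagonal terms bounds the first summand, and splitting `h = (h₁,0) + (0,h₂)` bounds the second.
-/

open ContinuousLinearMap

section Bilinear

variable {E M : Type*} [NormedAddCommGroup E] [NormedSpace ℝ E] [NormedAddCommGroup M]
  [NormedSpace ℝ M] {B : E →L[ℝ] E →L[ℝ] ℝ}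

lemma apply_add_add_self (hB : ∀ u v, B u v = B v u) (u v : E) :
    B (u + v) (u + v) = B u u + 2 * B u v + B v v := by
  simp only [map_add, add_apply, hB v u]
  ring

lemma apply_prod_self {B : E × M →L[ℝ] E × M →L[ℝ] ℝ} (hB : ∀ u v, B u v = B v u) (h : E × M) :
    B h h = B (h.1, 0) (h.1, 0) + 2 * B (h.1, 0) (0, h.2) + B (0, h.2) (0, h.2) := by
  rw [← apply_add_add_self hB, Prod.mk_add_mk, add_zero, zero_add]

lemma sq_apply_le_mul_of_nonpos (hB : ∀ u v, B u v = B v u) (hneg : ∀ v, B v v ≤ 0) (u v : E) :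
    B u v ^ 2 ≤ B u u * B v v := by
  have hdisc := discrim_le_zero (a := -B u u) (b := -2 * B u v) (c := -B v v) fun t => by
    have := hneg (t • u + v)
    rw [apply_add_add_self hB] at this
    simp only [map_smul, smul_apply, smul_eq_mul] at this
    linarith
  rw [discrim] at hdisc
  linarith

lemma abs_apply_le_of_bounds {C : ℝ} (hC : 0 ≤ C) (hB : ∀ u v, B u v = B v u)
    (hlow : ∀ v, -C * ‖v‖ ^ 2 ≤ B v v) (hup : ∀ v, B v v ≤ 0) (u v : E) :
    |B u v| ≤ C * ‖u‖ * ‖v‖ := by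
  refine abs_le_of_sq_le_sq ?_ (by positivity)
  calc B u v ^ 2 ≤ B u u * B v v := sq_apply_le_mul_of_nonpos hB hup u v
    _ = (-B u u) * (-B v v) := by ring
    _ ≤ (C * ‖u‖ ^ 2) * (C * ‖v‖ ^ 2) := by
        gcongr <;> linarith [hup u, hup v, hlow u, hlow v]
    _ = (C * ‖u‖ * ‖v‖) ^ 2 := by ring

lemma apply_eulerStep_le {β C δ : ℝ} (hβ : 0 ≤ β) (hC : 0 ≤ C)
    (hδ : 0 ≤ δ) (hB : ∀ u v, B u v = B v u) (hlow : ∀ v, -C * ‖v‖ ^ 2 ≤ B v v)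
    (hup : ∀ v, B v v ≤ -β * ‖v‖ ^ 2) (F : E →L[ℝ] E) (G : M →L[ℝ] E) (x : E) (y : M) :
    B (x + δ • (F x + G y)) (x + δ • (F x + G y)) ≤
      (2 * δ * C * ‖F‖ - β) * ‖x‖ ^ 2 + 2 * δ * C * ‖G‖ * (1 + δ * ‖F‖) * ‖x‖ * ‖y‖ := by
  have hneg : ∀ v, B v v ≤ 0 := fun v => (hup v).trans (by nlinarith [sq_nonneg ‖v‖])
  have hcross : ∀ u v, B u v ≤ C * ‖u‖ * ‖v‖ := fun u v =>
    (le_abs_self _).trans (abs_apply_le_of_bounds hC hB hlow hneg u v)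
  have hFx : ‖F x‖ ≤ ‖F‖ * ‖x‖ := F.le_opNorm x
  have ha : ‖x + δ • F x‖ ≤ (1 + δ * ‖F‖) * ‖x‖ := calc
    ‖x + δ • F x‖ ≤ ‖x‖ + δ * ‖F x‖ := by
      simpa [norm_smul, abs_of_nonneg hδ] using norm_add_le x (δ • F x)
    _ ≤ (1 + δ * ‖F‖) * ‖x‖ := by nlinarith
  have hb : ‖δ • G y‖ ≤ δ * (‖G‖ * ‖y‖) := by
    rw [norm_smul, Real.norm_of_nonneg hδ]
    exact mul_le_mul_of_nonneg_left (G.le_opNorm y) hδ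
  calc B (x + δ • (F x + G y)) (x + δ • (F x + G y))
      = B x x + 2 * δ * B x (F x) + δ ^ 2 * B (F x) (F x) + 2 * B (x + δ • F x) (δ • G y)
          + B (δ • G y) (δ • G y) := by
        rw [smul_add, ← add_assoc, apply_add_add_self hB, apply_add_add_self hB]
        simp only [map_smul, smul_apply, smul_eq_mul]
        ring
    _ ≤ -β * ‖x‖ ^ 2 + 2 * δ * (C * ‖x‖ * (‖F‖ * ‖x‖)) + δ ^ 2 * 0
          + 2 * (C * ((1 + δ * ‖F‖) * ‖x‖) * (δ * (‖G‖ * ‖y‖))) + 0 := by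
        gcongr
        · exact hup x
        · exact (hcross x (F x)).trans (by gcongr)
        · exact hneg (F x)
        · exact (hcross _ _).trans (by gcongr)
        · exact hneg _
    _ = (2 * δ * C * ‖F‖ - β) * ‖x‖ ^ 2 + 2 * δ * C * ‖G‖ * (1 + δ * ‖F‖) * ‖x‖ * ‖y‖ := by ring

end Bilinear

section Calculus

variable {𝕜 : Type*} [NontriviallyNormedField 𝕜]
  {E F G : Type*} [NormedAddCommGroup E] [NormedSpace 𝕜 E] [NormedAddCommGroup F] [NormedSpace 𝕜 F]
  [NormedAddCommGroup G] [NormedSpace 𝕜 G]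

lemma iteratedFDeriv_comp_affine_apply_s12 {n : WithTop ℕ∞} {f : E → F} (hf : ContDiff 𝕜 n f)
    {i : ℕ} (hi : i ≤ n) (L : G →L[𝕜] E) (c : E) (p : G) (v : Fin i → G) :
    iteratedFDeriv 𝕜 i (fun q => f (L q + c)) p v = iteratedFDeriv 𝕜 i f (L p + c) (L ∘ v) := by
  have hshift : ContDiff 𝕜 n fun y => f (y + c) := hf.comp (contDiff_id.add contDiff_const)
  change iteratedFDeriv 𝕜 i ((fun y => f (y + c)) ∘ L) p v = _
  rw [L.iteratedFDeriv_comp_right hshift p hi, iteratedFDeriv_comp_add_right]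
  rfl

lemma iteratedFDeriv_two_apply_vecCons (f : E → F) (x a b : E) :
    iteratedFDeriv 𝕜 2 f x ![a, b] = fderiv 𝕜 (fderiv 𝕜 f) x a b := by
  simp [iteratedFDeriv_two_apply]

end Calculus

section EulerStep

variable {E M : Type*} [NormedAddCommGroup E] [NormedSpace ℝ E] [NormedAddCommGroup M]
  [NormedSpace ℝ M]

lemma iteratedFDeriv_two_comp_eulerStep_add_mul {w : E → ℝ} (hw : ContDiff ℝ 2 w)
    {ℓ : E × M → ℝ} (hℓ : ContDiff ℝ 2 ℓ) (F : E →L[ℝ] E) (G : M →L[ℝ] E) (g : E) (δ : ℝ)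
    (p h : E × M) :
    iteratedFDeriv ℝ 2 (fun q : E × M => w (q.1 + δ • (F q.1 + G q.2 + g)) + δ * ℓ q) p ![h, h] =
      fderiv ℝ (fderiv ℝ w) (p.1 + δ • (F p.1 + G p.2 + g))
          (h.1 + δ • (F h.1 + G h.2)) (h.1 + δ • (F h.1 + G h.2)) +
        δ * fderiv ℝ (fderiv ℝ ℓ) p h h := by
  set L : E × M →L[ℝ] E := fst ℝ E M + δ • F.coprod G
  have hL : ∀ q : E × M, L q = q.1 + δ • (F q.1 + G q.2) := fun q => by simp [L]
  have hpt : ∀ q : E × M, q.1 + δ • (F q.1 + G q.2 + g) = L q + δ • g := fun q => by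
    rw [hL, smul_add, add_assoc]
  have hwL : ContDiff ℝ 2 fun q => w (L q + δ • g) := hw.comp (L.contDiff.add contDiff_const)
  simp only [hpt, ← smul_eq_mul (a := δ), ← hL]
  rw [fun_iteratedFDeriv_add_apply hwL.contDiffAt (hℓ.const_smul δ).contDiffAt,
    iteratedFDeriv_const_smul_apply' hℓ.contDiffAt, _root_.add_apply, _root_.smul_apply,
    iteratedFDeriv_comp_affine_apply_s12 hw le_rfl, iteratedFDeriv_two_apply_vecCons,
    iteratedFDeriv_two_apply]
  rfl

end EulerStep

theorem hessian_estimate_general (n m : ℕ)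
    (X : Set (EuclideanSpace ℝ (Fin n))) (U : Set (EuclideanSpace ℝ (Fin m)))
    (w : EuclideanSpace ℝ (Fin n) → ℝ) (hw : ContDiff ℝ 2 w)
    (ℓ : EuclideanSpace ℝ (Fin n) × EuclideanSpace ℝ (Fin m) → ℝ)
    (hℓ : ContDiff ℝ 2 ℓ)
    (F : EuclideanSpace ℝ (Fin n) →L[ℝ] EuclideanSpace ℝ (Fin n))
    (G : EuclideanSpace ℝ (Fin m) →L[ℝ] EuclideanSpace ℝ (Fin n))
    (g : EuclideanSpace ℝ (Fin n))
    (α β C : ℝ) (hβ : 0 < β) (hC : 0 < C)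
    (hwlow : ∀ x v, -C * ‖v‖ ^ 2 ≤ iteratedFDeriv ℝ 2 w x ![v, v])
    (hwup : ∀ x v, iteratedFDeriv ℝ 2 w x ![v, v] ≤ -β * ‖v‖ ^ 2)
    (hℓuu : ∀ p ∈ X ×ˢ U, ∀ hu,
      iteratedFDeriv ℝ 2 ℓ p ![(0, hu), (0, hu)] ≤ -α * ‖hu‖ ^ 2)
    (hℓxx : ∀ p ∈ X ×ˢ U, ∀ hx hy,
      |iteratedFDeriv ℝ 2 ℓ p ![(hx, 0), (hy, 0)]| ≤ C * ‖hx‖ * ‖hy‖)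
    (hℓxu : ∀ p ∈ X ×ˢ U, ∀ hx hu,
      |iteratedFDeriv ℝ 2 ℓ p ![(hx, 0), (0, hu)]| ≤ C * ‖hx‖ * ‖hu‖)
    (δ : ℝ) (hδ : 0 ≤ δ) :
    ∀ p ∈ X ×ˢ U, ∀ h : EuclideanSpace ℝ (Fin n) × EuclideanSpace ℝ (Fin m),
      iteratedFDeriv ℝ 2
          (fun q : EuclideanSpace ℝ (Fin n) × EuclideanSpace ℝ (Fin m) =>
            w (q.1 + δ • (F q.1 + G q.2 + g)) + δ * ℓ q) p ![h, h] ≤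
        (δ * C * (1 + 2 * ‖F‖) - β) * ‖h.1‖ ^ 2 - δ * α * ‖h.2‖ ^ 2 +
          2 * δ * C * (1 + ‖G‖ + δ * ‖F‖ * ‖G‖) * ‖h.1‖ * ‖h.2‖ := by
  intro p hp h
  have hw_symm : ∀ x, IsSymmSndFDerivAt ℝ w x := fun x =>
    hw.contDiffAt.isSymmSndFDerivAt (by simp [minSmoothness_of_isRCLikeNormedField])
  have hℓ_symm : IsSymmSndFDerivAt ℝ ℓ p :=
    hℓ.contDiffAt.isSymmSndFDerivAt (by simp [minSmoothness_of_isRCLikeNormedField])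
  simp only [iteratedFDeriv_two_apply_vecCons] at hwlow hwup hℓuu hℓxx hℓxu
  rw [iteratedFDeriv_two_comp_eulerStep_add_mul hw hℓ]
  set x' := p.1 + δ • (F p.1 + G p.2 + g)
  have hw_part :=
    apply_eulerStep_le hβ.le hC.le hδ (hw_symm x') (hwlow x') (hwup x') F G h.1 h.2
  have hℓ_part : fderiv ℝ (fderiv ℝ ℓ) p h h ≤
      C * ‖h.1‖ ^ 2 + 2 * C * ‖h.1‖ * ‖h.2‖ - α * ‖h.2‖ ^ 2 := by
    rw [apply_prod_self hℓ_symm]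
    linarith [(le_abs_self _).trans (hℓxx p hp h.1 h.1), (le_abs_self _).trans (hℓxu p hp h.1 h.2),
      hℓuu p hp h.2]
  linear_combination hw_part + mul_le_mul_of_nonneg_left hℓ_part hδ

/-- Hessian estimate in the concavity proof.  With `f(x,u) = F x + G u + g`
affine, `w ∈ C²` satisfying `−C Iₙ ≤ D²w ≤ −β Iₙ`, and `ℓ ∈ C²` with
`D²_u ℓ ≤ −α I_m`, `‖D²_x ℓ‖ ≤ C`, `‖D²_{xu} ℓ‖ ≤ C` on `X × U`, the
Hessian quadratic form of `b(x,u) = w(x + δ f(x,u)) + δ ℓ(x,u)` satisfies,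
for all `δ ≥ 0`, `(x,u) ∈ X × U` and `h = (h₁,h₂)`:
`h* ∇²b(x,u) h ≤ (δ C (1+2‖F‖) − β) ‖h₁‖² − δ α ‖h₂‖²
  + 2 δ C (1 + ‖G‖ + δ ‖F‖ ‖G‖) ‖h₁‖ ‖h₂‖`. -/
theorem hessian_estimate (n m : ℕ)
    (X : Set (EuclideanSpace ℝ (Fin n))) (U : Set (EuclideanSpace ℝ (Fin m)))
    (w : EuclideanSpace ℝ (Fin n) → ℝ) (hw : ContDiff ℝ 2 w)
    (ℓ : EuclideanSpace ℝ (Fin n) × EuclideanSpace ℝ (Fin m) → ℝ)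
    (hℓ : ContDiff ℝ 2 ℓ)
    (F : EuclideanSpace ℝ (Fin n) →L[ℝ] EuclideanSpace ℝ (Fin n))
    (G : EuclideanSpace ℝ (Fin m) →L[ℝ] EuclideanSpace ℝ (Fin n))
    (g : EuclideanSpace ℝ (Fin n))
    (α β C : ℝ) (hα : 0 < α) (hβ : 0 < β) (hC : 0 < C)
    (hwlow : ∀ x v, -C * ‖v‖ ^ 2 ≤ iteratedFDeriv ℝ 2 w x ![v, v])
    (hwup : ∀ x v, iteratedFDeriv ℝ 2 w x ![v, v] ≤ -β * ‖v‖ ^ 2)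
    (hℓuu : ∀ p ∈ X ×ˢ U, ∀ hu,
      iteratedFDeriv ℝ 2 ℓ p ![(0, hu), (0, hu)] ≤ -α * ‖hu‖ ^ 2)
    (hℓxx : ∀ p ∈ X ×ˢ U, ∀ hx hy,
      |iteratedFDeriv ℝ 2 ℓ p ![(hx, 0), (hy, 0)]| ≤ C * ‖hx‖ * ‖hy‖)
    (hℓxu : ∀ p ∈ X ×ˢ U, ∀ hx hu,
      |iteratedFDeriv ℝ 2 ℓ p ![(hx, 0), (0, hu)]| ≤ C * ‖hx‖ * ‖hu‖)
    (δ : ℝ) (hδ : 0 ≤ δ) :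
    ∀ p ∈ X ×ˢ U, ∀ h : EuclideanSpace ℝ (Fin n) × EuclideanSpace ℝ (Fin m),
      iteratedFDeriv ℝ 2
          (fun q : EuclideanSpace ℝ (Fin n) × EuclideanSpace ℝ (Fin m) =>
            w (q.1 + δ • (F q.1 + G q.2 + g)) + δ * ℓ q) p ![h, h] ≤
        (δ * C * (1 + 2 * ‖F‖) - β) * ‖h.1‖ ^ 2 - δ * α * ‖h.2‖ ^ 2 +
          2 * δ * C * (1 + ‖G‖ + δ * ‖F‖ * ‖G‖) * ‖h.1‖ * ‖h.2‖ :=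
  hessian_estimate_general n m X U w hw ℓ hℓ F G g α β C hβ hC hwlow hwup hℓuu hℓxx hℓxu δ hδ
end
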